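/- Let M be a set of continuous linear operators from X to Y for which there exists C > 0 such that for every finite choice x₁,...,xₙ ∈ X and T₁,...,Tₙ ∈ M there is an operator T ∈ Π_p(X,Y) with π_p(T) ≤ C and ‖Tᵢ(xᵢ)‖ ≤ ‖T(xᵢ)‖ for each i. Then M is uniformly dominated, i.e., there is a single positive finite Borel measure μ on B_{X*} such that ‖T(x)‖^p ≤ ∫_{B_{X*}} |φ(x)|^p dμ(φ) for all T ∈ M and x ∈ X. -/

import Mathlib

open MeasureTheory

noncomputable section

variable {X : Type*} [NormedAddCommGroup X] [NormedSpace ℝ X] [CompleteSpace X]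
variable {Y : Type*} [NormedAddCommGroup Y] [NormedSpace ℝ Y] [CompleteSpace Y]

/-- The closed unit ball of the dual of `X`, with the weak-star topology. -/
def dualBall (X : Type*) [NormedAddCommGroup X] [NormedSpace ℝ X] : Set (WeakDual ℝ X) :=
  {φ | ∀ x : X, ‖φ x‖ ≤ ‖x‖}

instance (X : Type*) [NormedAddCommGroup X] [NormedSpace ℝ X] :
    MeasurableSpace (dualBall X) := borel _

instance (X : Type*) [NormedAddCommGroup X] [NormedSpace ℝ X] :
    BorelSpace (dualBall X) := ⟨rfl⟩

/-- `T` satisfies the absolutely `p`-summing inequality with constant `C`. -/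
def SummingWith (p : ℝ) (T : X →L[ℝ] Y) (C : ℝ) : Prop :=
  ∀ (m : ℕ) (x : Fin m → X),
    (∑ i, ‖T (x i)‖ ^ p) ^ (1 / p) ≤
      C * ⨆ φ : dualBall X, (∑ i, ‖(φ : WeakDual ℝ X) (x i)‖ ^ p) ^ (1 / p)

/-- `T` is absolutely `p`-summing. -/
def AbsolutelySumming (p : ℝ) (T : X →L[ℝ] Y) : Prop :=
  ∃ C : ℝ, 0 ≤ C ∧ SummingWith p T C

/-- The absolutely `p`-summing norm `π_p(T)`. -/
def piNorm (p : ℝ) (T : X →L[ℝ] Y) : ℝ :=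
  sInf {C : ℝ | 0 ≤ C ∧ SummingWith p T C}

/-- `M` is uniformly dominated by the measure `μ` on the dual unit ball. -/
def UniformlyDominatedBy (p : ℝ) (M : Set (X →L[ℝ] Y)) (μ : Measure (dualBall X)) : Prop :=
  ∀ T ∈ M, ∀ x : X, ‖T x‖ ^ p ≤ ∫ φ : dualBall X, ‖(φ : WeakDual ℝ X) x‖ ^ p ∂μ

/-!
The hypothesis says that every function in the convex cone generated by
`φ ↦ ‖T x‖ ^ p - C ^ p * |φ x| ^ p` (`T ∈ M`, `x ∈ X`) on the weak-star compact ball `B_{X*}`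
is nonpositive somewhere: rescaling turns a positive combination into a finite family, the
dominating `p`-summing operator gives the summing inequality, and the supremum in it is attained.
So the cone misses the open convex set of strictly positive functions; Hahn–Banach separates
them by a positive functional that is nonpositive on the cone, and the Riesz–Markov–Kakutani
measure of this functional, suitably normalised, dominates `M`.
-/

open Set
open scoped CompactlySupported

lemma nonneg_and_nonpos_of_forall_pos_le_mul {u t : ℝ} (h : ∀ c : ℝ, 0 < c → u ≤ c * t) :
    0 ≤ t ∧ u ≤ 0 := by
  have ht : 0 ≤ t := by
    by_contra! ht
    have := h ((|u| + 1) / -t) (div_pos (by positivity) (neg_pos.mpr ht))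
    rw [div_mul_eq_mul_div, div_neg, mul_div_cancel_right₀ _ ht.ne] at this
    linarith [neg_abs_le u]
  refine ⟨ht, le_of_forall_pos_le_add fun ε hε => ?_⟩
  have := h (ε / (t + 1)) (by positivity)
  have : ε / (t + 1) * t ≤ ε := by
    rw [div_mul_eq_mul_div, div_le_iff₀ (by positivity)]; nlinarith
  linarith

lemma Real.rpow_one_div_le_mul_rpow_one_div_iff {p a b C : ℝ} (hp : 0 < p) (ha : 0 ≤ a)
    (hb : 0 ≤ b) (hC : 0 ≤ C) : a ^ (1 / p) ≤ C * b ^ (1 / p) ↔ a ≤ C ^ p * b := by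
  have hCb : 0 ≤ C ^ p * b := mul_nonneg (Real.rpow_nonneg hC p) hb
  rw [← Real.rpow_le_rpow_iff ha hCb (one_div_pos.mpr hp),
    Real.mul_rpow (Real.rpow_nonneg hC p) hb, ← Real.rpow_mul hC, mul_one_div_cancel hp.ne',
    Real.rpow_one]

lemma norm_rpow_one_div_smul_rpow {V : Type*} [NormedAddCommGroup V] [NormedSpace ℝ V] {p c : ℝ}
    (hp : p ≠ 0) (hc : 0 ≤ c) (v : V) : ‖c ^ (1 / p) • v‖ ^ p = c * ‖v‖ ^ p := by
  rw [norm_smul, Real.norm_of_nonneg (Real.rpow_nonneg hc _),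
    Real.mul_rpow (Real.rpow_nonneg hc _) (norm_nonneg v), ← Real.rpow_mul hc,
    one_div_mul_cancel hp, Real.rpow_one]

theorem ConvexCone.exists_dual_nonneg_of_disjoint_isOpen {E : Type*} [AddCommGroup E] [Module ℝ E]
    [TopologicalSpace E] [IsTopologicalAddGroup E] [ContinuousSMul ℝ E] [LocallyConvexSpace ℝ E]
    (A : ConvexCone ℝ E) (hA : (A : Set E).Nonempty) {U : Set E} (hUo : IsOpen U)
    (hUc : Convex ℝ U) (hUA : Disjoint U A) :
    ∃ L : StrongDual ℝ E, (∀ a ∈ A, 0 ≤ L a) ∧ ∀ b ∈ U, L b < 0 := by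
  obtain ⟨L, u, hLU, hLA⟩ := geometric_hahn_banach_open hUc hUo A.convex hUA
  have key : ∀ a ∈ A, 0 ≤ L a ∧ u ≤ 0 := fun a ha =>
    nonneg_and_nonpos_of_forall_pos_le_mul fun c hc => by
      simpa using hLA _ (A.smul_mem hc ha)
  obtain ⟨a, ha⟩ := hA
  exact ⟨L, fun a ha => (key a ha).1, fun b hb => (hLU b hb).trans_le (key a ha).2⟩

section CompactSpace

variable {K : Type*} [TopologicalSpace K]

theorem ContinuousMap.isOpen_setOf_forall_pos [CompactSpace K] :
    IsOpen {f : C(K, ℝ) | ∀ x, 0 < f x} := by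
  simpa [MapsTo] using
    ContinuousMap.isOpen_setOfPred_mapsTo (X := K) isCompact_univ (isOpen_Ioi (a := (0 : ℝ)))

theorem ContinuousMap.convex_setOf_forall_pos :
    Convex ℝ {f : C(K, ℝ) | ∀ x, 0 < f x} := by
  intro f hf g hg a b ha hb hab x
  have : 0 < a * f x + b * g x := by
    rcases ha.eq_or_lt with rfl | ha
    · simp at hab; subst hab; simpa using hg x
    · exact add_pos_of_pos_of_nonneg (mul_pos ha (hf x)) (mul_nonneg hb (hg x).le)
  simpa using this

theorem ConvexCone.exists_positiveLinearMap_nonpos [CompactSpace K]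
    (A : ConvexCone ℝ C(K, ℝ)) (hA : (A : Set C(K, ℝ)).Nonempty)
    (hAK : ∀ f ∈ A, ∃ x, f x ≤ 0) :
    ∃ Λ : C(K, ℝ) →ₚ[ℝ] ℝ, 0 < Λ 1 ∧ ∀ f ∈ A, Λ f ≤ 0 := by
  have hd : Disjoint {f : C(K, ℝ) | ∀ x, 0 < f x} A := by
    refine Set.disjoint_right.mpr fun f hf hpos => ?_
    obtain ⟨x, hx⟩ := hAK f hf
    exact (hpos x).not_ge hx
  obtain ⟨L, hLA, hLU⟩ := A.exists_dual_nonneg_of_disjoint_isOpen hA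
    ContinuousMap.isOpen_setOf_forall_pos ContinuousMap.convex_setOf_forall_pos hd
  have hL1 : L 1 < 0 := hLU 1 fun _ => one_pos
  have hpos : ∀ f : C(K, ℝ), 0 ≤ f → 0 ≤ -L f := by
    intro f hf
    refine neg_nonneg.mpr (le_of_forall_pos_le_add fun ε hε => ?_)
    have := hLU (f + (ε / -L 1) • 1) fun x => by
      have := hf x
      simp only [ContinuousMap.add_apply, ContinuousMap.smul_apply, ContinuousMap.one_apply,
        smul_eq_mul, mul_one]
      exact add_pos_of_nonneg_of_pos this (div_pos hε (neg_pos.mpr hL1))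
    rw [map_add, map_smul, smul_eq_mul, div_mul_eq_mul_div, div_neg,
      mul_div_cancel_right₀ _ hL1.ne] at this
    linarith
  exact ⟨PositiveLinearMap.mk₀ (-L).toLinearMap hpos, neg_pos.mpr hL1,
    fun f hf => neg_nonpos.mpr (hLA f hf)⟩

variable [CompactSpace K] [T2Space K] [MeasurableSpace K] [BorelSpace K]

theorem ContinuousMap.exists_finiteMeasure_integral_eq (Λ : C(K, ℝ) →ₚ[ℝ] ℝ) :
    ∃ μ : Measure K, IsFiniteMeasure μ ∧ ∀ f : C(K, ℝ), ∫ x, f x ∂μ = Λ f := by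
  let e := CompactlySupportedContinuousMap.continuousMapEquiv (α := K) (β := ℝ)
  let Λc : C_c(K, ℝ) →ₚ[ℝ] ℝ :=
    { toFun g := Λ (e.symm g)
      map_add' _ _ := map_add Λ _ _
      map_smul' _ _ := map_smul Λ _ _
      monotone' _ _ h := Λ.monotone' h }
  exact ⟨RealRMK.rieszMeasure Λc, inferInstance, fun f => RealRMK.integral_rieszMeasure Λc (e f)⟩

theorem ConvexCone.exists_finiteMeasure_integral_nonpos
    (A : ConvexCone ℝ C(K, ℝ)) (hA : (A : Set C(K, ℝ)).Nonempty)
    (hAK : ∀ f ∈ A, ∃ x, f x ≤ 0) :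
    ∃ μ : Measure K, IsFiniteMeasure μ ∧ 0 < μ.real univ ∧ ∀ f ∈ A, ∫ x, f x ∂μ ≤ 0 := by
  obtain ⟨Λ, hΛ1, hΛA⟩ := A.exists_positiveLinearMap_nonpos hA hAK
  obtain ⟨μ, hμ, hμΛ⟩ := ContinuousMap.exists_finiteMeasure_integral_eq Λ
  refine ⟨μ, hμ, by simpa using hΛ1.trans_eq (hμΛ 1).symm, fun f hf => (hμΛ f).symm ▸ hΛA f hf⟩

end CompactSpace

section DualBall

variable {E : Type*} [NormedAddCommGroup E] [NormedSpace ℝ E]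

lemma dualBall_eq_polar : dualBall E = WeakDual.polar ℝ (Metric.closedBall (0 : E) 1) := by
  ext φ
  refine ⟨fun hφ x hx => (hφ x).trans (by simpa using hx), fun hφ x => ?_⟩
  rcases eq_or_ne x 0 with rfl | hx
  · simp
  · have hx0 : 0 < ‖x‖ := norm_pos_iff.mpr hx
    have : ‖φ (‖x‖⁻¹ • x)‖ ≤ 1 := hφ (‖x‖⁻¹ • x) (by simp [norm_smul, hx0.ne'])
    rwa [map_smul, smul_eq_mul, norm_mul, norm_inv, norm_norm, inv_mul_le_iff₀ hx0, mul_one] at this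

instance : CompactSpace (dualBall E) :=
  isCompact_iff_compactSpace.mp <| dualBall_eq_polar (E := E) ▸
    WeakDual.isCompact_polar ℝ (Metric.closedBall_mem_nhds 0 one_pos)

instance : Nonempty (dualBall E) :=
  ⟨⟨0, fun x => by rw [show (0 : WeakDual ℝ E) x = 0 from rfl, norm_zero]; exact norm_nonneg x⟩⟩

lemma continuous_norm_apply_rpow {p : ℝ} (hp : 0 ≤ p) (x : E) :
    Continuous fun φ : dualBall E => ‖(φ : WeakDual ℝ E) x‖ ^ p :=
  ((WeakDual.eval_continuous x).comp continuous_subtype_val).norm.rpow_const fun _ => Or.inr hp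

end DualBall

section Summing

variable {E F : Type*} [NormedAddCommGroup E] [NormedSpace ℝ E] [NormedAddCommGroup F]
  [NormedSpace ℝ F] {p : ℝ} {T : E →L[ℝ] F}

lemma isClosed_setOf_summingWith :
    IsClosed {C : ℝ | 0 ≤ C ∧ SummingWith p T C} := by
  simp only [SummingWith, ofPred_and, ofPred_forall]
  exact (isClosed_le continuous_const continuous_id).inter
    (isClosed_iInter fun m => isClosed_iInter fun x =>
      isClosed_le continuous_const (continuous_id.mul continuous_const))

lemma AbsolutelySumming.summingWith_piNorm (hT : AbsolutelySumming p T) :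
    SummingWith p T (piNorm p T) :=
  (isClosed_setOf_summingWith.csInf_mem hT ⟨0, fun _ hC => hC.1⟩).2

lemma SummingWith.mono {C C' : ℝ} (hT : SummingWith p T C) (hCC' : C ≤ C') :
    SummingWith p T C' := fun m x =>
  (hT m x).trans <| mul_le_mul_of_nonneg_right hCC' <|
    Real.iSup_nonneg fun _ => Real.rpow_nonneg (Finset.sum_nonneg fun _ _ => by positivity) _

lemma SummingWith.exists_sum_rpow_le (hp : 0 < p) {C : ℝ} (hC : 0 ≤ C)
    (hT : SummingWith p T C) {n : ℕ} (x : Fin n → E) :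
    ∃ φ : dualBall E, ∑ i, ‖T (x i)‖ ^ p ≤ C ^ p * ∑ i, ‖(φ : WeakDual ℝ E) (x i)‖ ^ p := by
  have hF : Continuous fun φ : dualBall E => (∑ i, ‖(φ : WeakDual ℝ E) (x i)‖ ^ p) ^ (1 / p) :=
    (continuous_finsetSum _ fun i _ => continuous_norm_apply_rpow hp.le (x i)).rpow_const
      fun _ => Or.inr (by positivity)
  obtain ⟨φ₀, -, hφ₀⟩ := isCompact_univ.exists_isMaxOn univ_nonempty hF.continuousOn
  refine ⟨φ₀, (Real.rpow_one_div_le_mul_rpow_one_div_iff hp (by positivity) (by positivity)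
    hC).mp ?_⟩
  exact (hT n x).trans <| mul_le_mul_of_nonneg_left (ciSup_le fun φ => hφ₀ (mem_univ φ)) hC

end Summing

section Cone

variable {E F : Type*} [NormedAddCommGroup E] [NormedSpace ℝ E] [NormedAddCommGroup F]
  [NormedSpace ℝ F] {p C : ℝ} {M : Set (E →L[ℝ] F)}

/-- The weights `c i` make this a cone for every `p`, without rescaling the points `x i`. -/
def dominationCone (p : ℝ) (M : Set (E →L[ℝ] F)) (C : ℝ) : ConvexCone ℝ C(dualBall E, ℝ) where
  carrier := {f | ∃ (n : ℕ) (c : Fin n → ℝ) (x : Fin n → E) (T : Fin n → E →L[ℝ] F),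
    (∀ i, 0 ≤ c i ∧ T i ∈ M) ∧
      ∀ φ, f φ = ∑ i, c i * (‖T i (x i)‖ ^ p - C ^ p * ‖(φ : WeakDual ℝ E) (x i)‖ ^ p)}
  smul_mem' := by
    rintro a ha f ⟨n, c, x, T, hcT, hf⟩
    refine ⟨n, a • c, x, T, fun i => ⟨mul_nonneg ha.le (hcT i).1, (hcT i).2⟩, fun φ => ?_⟩
    simp [hf, Finset.mul_sum, mul_assoc]
  add_mem' := by
    rintro f ⟨n, c, x, T, hcT, hf⟩ g ⟨m, c', x', T', hcT', hg⟩
    refine ⟨n + m, Fin.append c c', Fin.append x x', Fin.append T T',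
      Fin.addCases (by simpa using hcT) (by simpa using hcT'), fun φ => ?_⟩
    simp [hf, hg, Fin.sum_univ_add]

lemma dominationCone_nonempty : (dominationCone p M C : Set C(dualBall E, ℝ)).Nonempty :=
  ⟨0, 0, Fin.elim0, Fin.elim0, Fin.elim0, fun i => i.elim0, fun φ => by simp⟩

lemma exists_mem_dominationCone (hp : 0 ≤ p) {T : E →L[ℝ] F} (hT : T ∈ M) (x : E) :
    ∃ f ∈ dominationCone p M C,
      ∀ φ, f φ = ‖T x‖ ^ p - C ^ p * ‖(φ : WeakDual ℝ E) x‖ ^ p :=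
  ⟨⟨_, continuous_const.sub (continuous_const.mul (continuous_norm_apply_rpow hp x))⟩,
    ⟨1, 1, fun _ => x, fun _ => T, fun _ => ⟨zero_le_one, hT⟩, fun φ => by simp⟩, fun _ => rfl⟩

lemma exists_nonpos_of_mem_dominationCone (hp : 0 < p) (hC : 0 ≤ C)
    (h : ∀ (n : ℕ) (x : Fin n → E) (T : Fin n → E →L[ℝ] F), (∀ i, T i ∈ M) →
      ∃ S : E →L[ℝ] F, AbsolutelySumming p S ∧ piNorm p S ≤ C ∧
        ∀ i, ‖T i (x i)‖ ≤ ‖S (x i)‖)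
    {f : C(dualBall E, ℝ)} (hf : f ∈ dominationCone p M C) : ∃ φ, f φ ≤ 0 := by
  obtain ⟨n, c, x, T, hcT, hf⟩ := hf
  set y : Fin n → E := fun i => c i ^ (1 / p) • x i
  obtain ⟨S, hS, hSC, hTS⟩ := h n y T fun i => (hcT i).2
  obtain ⟨φ, hφ⟩ := (hS.summingWith_piNorm.mono hSC).exists_sum_rpow_le hp hC y
  refine ⟨φ, ?_⟩
  have hTy : ∀ i, ‖T i (y i)‖ ^ p = c i * ‖T i (x i)‖ ^ p := fun i => by
    simp only [y, map_smul, norm_rpow_one_div_smul_rpow hp.ne' (hcT i).1]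
  have hφy : ∀ i, ‖(φ : WeakDual ℝ E) (y i)‖ ^ p = c i * ‖(φ : WeakDual ℝ E) (x i)‖ ^ p :=
    fun i => by simp only [y, map_smul, norm_rpow_one_div_smul_rpow hp.ne' (hcT i).1]
  have hTS' : ∑ i, ‖T i (y i)‖ ^ p ≤ ∑ i, ‖S (y i)‖ ^ p :=
    Finset.sum_le_sum fun i _ => Real.rpow_le_rpow (norm_nonneg _) (hTS i) hp.le
  calc f φ = ∑ i, ‖T i (y i)‖ ^ p - C ^ p * ∑ i, ‖(φ : WeakDual ℝ E) (y i)‖ ^ p := by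
        rw [hf, Finset.mul_sum, ← Finset.sum_sub_distrib]
        exact Finset.sum_congr rfl fun i _ => by rw [hTy, hφy]; ring
    _ ≤ 0 := by linarith

end Cone

theorem stmt5 (p : ℝ) (hp : 1 ≤ p) (M : Set (X →L[ℝ] Y)) (C : ℝ) (hC : 0 < C)
    (h : ∀ (n : ℕ) (x : Fin n → X) (T : Fin n → X →L[ℝ] Y), (∀ i, T i ∈ M) →
      ∃ S : X →L[ℝ] Y, AbsolutelySumming p S ∧ piNorm p S ≤ C ∧
        ∀ i, ‖T i (x i)‖ ≤ ‖S (x i)‖) :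
    ∃ μ : Measure (dualBall X), IsFiniteMeasure μ ∧ UniformlyDominatedBy p M μ := by
  have hp0 : 0 < p := by linarith
  obtain ⟨μ, hμ, hμpos, hμA⟩ := (dominationCone p M C).exists_finiteMeasure_integral_nonpos
    dominationCone_nonempty fun f hf => exists_nonpos_of_mem_dominationCone hp0 hC.le h hf
  refine ⟨ENNReal.ofReal (C ^ p / μ.real univ) • μ, μ.smul_finite ENNReal.ofReal_ne_top,
    fun T hT x => ?_⟩
  obtain ⟨f, hf, hfφ⟩ := exists_mem_dominationCone (C := C) hp0.le hT x
  have hg : Integrable (fun φ : dualBall X => ‖(φ : WeakDual ℝ X) x‖ ^ p) μ :=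
    (continuous_norm_apply_rpow hp0.le x).integrable_of_hasCompactSupport
      (HasCompactSupport.of_compactSpace _)
  have hTx : ‖T x‖ ^ p * μ.real univ ≤ C ^ p * ∫ φ, ‖(φ : WeakDual ℝ X) x‖ ^ p ∂μ := by
    have := hμA f hf
    simp only [hfφ] at this
    rw [integral_sub (integrable_const _) (hg.const_mul _), integral_const, integral_const_mul,
      smul_eq_mul] at this
    linarith
  rw [integral_smul_measure, ENNReal.toReal_ofReal (by positivity), smul_eq_mul,
    div_mul_eq_mul_div, le_div_iff₀ hμpos]
  exact hTx
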